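/- arXiv:2506.22171 — 4 statements merged into one kernel-verified Lean document; each statement's English description precedes it below -/
import Mathlib

section
/- Under the PoB incentive-compatibility assumption L > ΔR, for every round t ∈ ℕ, the discounted payoff of the strategy that deviates exactly once at round t, namely ∑_{n<t} δ^n·r + δ^t·(ρ_p·r + ΔR − P) + ∑_{n>t} δ^n·ρ_p·r, is strictly less than the discounted payoff r/(1−δ) = ∑_{n=0}^∞ δ^n·r of perpetual honesty. -/
/-- Under the PoB incentive-compatibility assumption `L > ΔR`, for every
round `t`, the discounted payoff of the strategy that deviates exactly once at round `t`
is strictly less than the discounted payoff `r / (1 - δ)` of perpetual honesty. -/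
theorem pob_deviate_once_lt_honest
    (δ r ΔR P ρp : ℝ)
    (hδ0 : 0 < δ) (hδ1 : δ < 1)
    (hr : 0 ≤ r) (hΔR : 0 ≤ ΔR) (hP : 0 ≤ P)
    (hρp0 : 0 ≤ ρp) (hρp1 : ρp < 1)
    (L : ℝ) (hL : L = P + (1 - ρp) * r / (1 - δ))
    (hIC : L > ΔR)
    (t : ℕ) :
    (∑' n : ℕ, δ ^ n *
        (if n < t then r else if n = t then ρp * r + ΔR - P else ρp * r))
      < r / (1 - δ) := by
  have hδne : δ ≠ 1 := ne_of_lt hδ1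
  have h1δ : (0:ℝ) < 1 - δ := by linarith
  have hgeo : Summable (fun n : ℕ => δ ^ n * (ρp * r)) :=
    (summable_geometric_of_lt_one hδ0.le hδ1).mul_right _
  set g : ℕ → ℝ := fun n =>
    if n < t then δ ^ n * ((1 - ρp) * r) else if n = t then δ ^ t * (ΔR - P) else 0 with hg
  have hgsupp : ∀ n ∉ Finset.range (t + 1), g n = 0 := by
    intro n hn
    simp only [Finset.mem_range, not_lt] at hn
    have h1 : ¬ n < t := by omega
    have h2 : n ≠ t := by omega
    simp [hg, h1, h2]
  have hgsum : Summable g := summable_of_ne_finset_zero hgsupp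
  have hfun : (fun n : ℕ => δ ^ n *
      (if n < t then r else if n = t then ρp * r + ΔR - P else ρp * r))
      = fun n => δ ^ n * (ρp * r) + g n := by
    funext n
    simp only [hg]
    split_ifs with h1 h2
    · ring
    · subst h2; ring
    · ring
  rw [hfun, Summable.tsum_add hgeo hgsum]
  have hgeoval : (∑' n : ℕ, δ ^ n * (ρp * r)) = ρp * r / (1 - δ) := by
    rw [tsum_mul_right, tsum_geometric_of_lt_one hδ0.le hδ1]
    ring
  have hgval : (∑' n, g n) = (∑ n ∈ Finset.range t, δ ^ n) * ((1 - ρp) * r)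
      + δ ^ t * (ΔR - P) := by
    rw [tsum_eq_sum hgsupp, Finset.sum_range_succ]
    have h2 : ¬ t < t := lt_irrefl t
    have : ∀ n ∈ Finset.range t, g n = δ ^ n * ((1 - ρp) * r) := by
      intro n hn
      simp only [Finset.mem_range] at hn
      simp [hg, hn]
    rw [Finset.sum_congr rfl this, ← Finset.sum_mul]
    simp [hg, h2]
  rw [hgeoval, hgval, geom_sum_eq hδne]
  have hpow : (0:ℝ) < δ ^ t := pow_pos hδ0 t
  have hIC' : ΔR - P < (1 - ρp) * r / (1 - δ) := by
    rw [hL] at hIC; linarith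
  have key : δ ^ t * (ΔR - P) < δ ^ t * ((1 - ρp) * r / (1 - δ)) :=
    (mul_lt_mul_iff_right₀ hpow).2 hIC'
  have hne : (1:ℝ) - δ ≠ 0 := ne_of_gt h1δ
  have hδm1 : δ - 1 ≠ 0 := by intro h; apply hne; linarith
  have e : ρp * r / (1 - δ) + ((δ ^ t - 1) / (δ - 1) * ((1 - ρp) * r) + δ ^ t * (ΔR - P))
      = r / (1 - δ) - (δ ^ t * ((1 - ρp) * r / (1 - δ)) - δ ^ t * (ΔR - P)) := by
    field_simp
    ring
  rw [e]
  linarith [key]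
end

section
/- Under the PoB incentive-compatibility assumption L > ΔR, any strategy whose first deviation occurs at some round t earns strictly less than perpetual honesty: if (a_n) is a bounded real sequence with a_n = r for all n < t, a_t ≤ ρ_p·r + ΔR − P, and a_n ≤ ρ_p·r for all n > t, then ∑_{n=0}^∞ δ^n·a_n ≤ r/(1−δ) + δ^t·(ΔR − L) < r/(1−δ). -/
/-!
Split the discounted sum at the first deviation `t`: the first `t` rounds agree with perpetual
honesty, so the two strategies differ only by `δ ^ t` times the difference of their continuation
values. Honesty continues with `r / (1 - δ)`, while the deviator gets at most
`ρp * r + ΔR - P` at round `t` and at most `ρp * r` forever after, i.e. at most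
`r / (1 - δ) + ΔR - L`. The incentive-compatibility condition `L > ΔR` makes the gap negative.
-/

noncomputable def discountedPayoff (δ : ℝ) (a : ℕ → ℝ) : ℝ :=
  ∑' n, δ ^ n * a n

namespace discountedPayoff

variable {δ : ℝ} {a : ℕ → ℝ}

theorem summable (hδ0 : 0 ≤ δ) (hδ1 : δ < 1) (hbd : ∃ C, ∀ n, |a n| ≤ C) :
    Summable fun n => δ ^ n * a n := by
  obtain ⟨C, hC⟩ := hbd
  refine Summable.of_norm_bounded ((summable_geometric_of_lt_one hδ0 hδ1).mul_left C) fun n => ?_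
  rw [Real.norm_eq_abs, abs_mul, abs_of_nonneg (pow_nonneg hδ0 n), mul_comm]
  exact mul_le_mul_of_nonneg_right (hC n) (pow_nonneg hδ0 n)

theorem const (hδ0 : 0 ≤ δ) (hδ1 : δ < 1) (c : ℝ) :
    discountedPayoff δ (fun _ => c) = c / (1 - δ) := by
  simp only [discountedPayoff]
  rw [tsum_mul_right, tsum_geometric_of_lt_one hδ0 hδ1, div_eq_inv_mul]

theorem le_of_le (hδ0 : 0 ≤ δ) (hδ1 : δ < 1) (hbd : ∃ C, ∀ n, |a n| ≤ C) {c : ℝ}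
    (hc : ∀ n, a n ≤ c) : discountedPayoff δ a ≤ c / (1 - δ) := by
  rw [← const hδ0 hδ1 c]
  exact (summable hδ0 hδ1 hbd).tsum_le_tsum
    (fun n => mul_le_mul_of_nonneg_left (hc n) (pow_nonneg hδ0 n))
    (summable hδ0 hδ1 ⟨|c|, fun _ => le_rfl⟩)

theorem eq_sum_add_pow_mul_shift (hδ0 : 0 ≤ δ) (hδ1 : δ < 1) (hbd : ∃ C, ∀ n, |a n| ≤ C)
    (k : ℕ) : discountedPayoff δ a =
      ∑ n ∈ Finset.range k, δ ^ n * a n + δ ^ k * discountedPayoff δ (fun n => a (n + k)) := by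
  rw [discountedPayoff, ← (summable hδ0 hδ1 hbd).sum_add_tsum_nat_add k, discountedPayoff,
    ← tsum_mul_left]
  simp only [pow_add, mul_assoc, mul_left_comm (δ ^ k)]

theorem le_of_first_deviation (hδ0 : 0 ≤ δ) (hδ1 : δ < 1) (hbd : ∃ C, ∀ n, |a n| ≤ C)
    {r x y : ℝ} {t : ℕ} (hbefore : ∀ n < t, a n = r) (hat : a t ≤ x)
    (hafter : ∀ n > t, a n ≤ y) :
    discountedPayoff δ a ≤ r / (1 - δ) + δ ^ t * (x + δ * (y / (1 - δ)) - r / (1 - δ)) := by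
  have hhonest := eq_sum_add_pow_mul_shift hδ0 hδ1 ⟨|r|, fun _ => le_rfl⟩ t
  simp only [const hδ0 hδ1] at hhonest
  have hprefix : ∑ n ∈ Finset.range t, δ ^ n * a n = ∑ n ∈ Finset.range t, δ ^ n * r :=
    Finset.sum_congr rfl fun n hn => by rw [hbefore n (Finset.mem_range.mp hn)]
  obtain ⟨C, hC⟩ := hbd
  have htail : discountedPayoff δ (fun n => a (n + t)) ≤ x + δ * (y / (1 - δ)) := by
    rw [eq_sum_add_pow_mul_shift hδ0 hδ1 ⟨C, fun n => hC (n + t)⟩ 1]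
    simp only [Finset.sum_range_one, pow_zero, one_mul, pow_one, zero_add]
    gcongr
    exact le_of_le hδ0 hδ1 ⟨C, fun n => hC _⟩ fun n => hafter _ (by omega)
  calc discountedPayoff δ a
      = ∑ n ∈ Finset.range t, δ ^ n * r + δ ^ t * discountedPayoff δ (fun n => a (n + t)) := by
        rw [eq_sum_add_pow_mul_shift hδ0 hδ1 ⟨C, hC⟩ t, hprefix]
    _ ≤ ∑ n ∈ Finset.range t, δ ^ n * r + δ ^ t * (x + δ * (y / (1 - δ))) := by gcongr
    _ = r / (1 - δ) + δ ^ t * (x + δ * (y / (1 - δ)) - r / (1 - δ)) := by linarith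

end discountedPayoff

theorem pob_first_deviation_lt_honest_general
    (δ r ΔR P ρp : ℝ)
    (hδ0 : 0 < δ) (hδ1 : δ < 1)
    (L : ℝ) (hL : L = P + (1 - ρp) * r / (1 - δ))
    (hIC : L > ΔR)
    (t : ℕ) (a : ℕ → ℝ)
    (hbd : ∃ C, ∀ n, |a n| ≤ C)
    (hbefore : ∀ n < t, a n = r)
    (hat : a t ≤ ρp * r + ΔR - P)
    (hafter : ∀ n > t, a n ≤ ρp * r) :
    (∑' n : ℕ, δ ^ n * a n) ≤ r / (1 - δ) + δ ^ t * (ΔR - L) ∧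
      r / (1 - δ) + δ ^ t * (ΔR - L) < r / (1 - δ) := by
  have hgap : ρp * r + ΔR - P + δ * (ρp * r / (1 - δ)) - r / (1 - δ) = ΔR - L := by
    have : 1 - δ ≠ 0 := by linarith
    rw [hL]
    field_simp
    ring
  have hdev := discountedPayoff.le_of_first_deviation hδ0.le hδ1 hbd hbefore hat hafter
  rw [hgap] at hdev
  exact ⟨hdev, by linarith [mul_neg_of_pos_of_neg (pow_pos hδ0 t) (sub_neg.mpr hIC)]⟩

/-- Under the PoB incentive-compatibility assumption `L > ΔR`, any bounded
payoff sequence whose first deviation occurs at round `t` earns discounted payoff at most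
`r/(1-δ) + δ^t (ΔR - L)`, which is strictly less than the payoff `r/(1-δ)` of perpetual
honesty. -/
theorem pob_first_deviation_lt_honest
    (δ r ΔR P ρp : ℝ)
    (hδ0 : 0 < δ) (hδ1 : δ < 1)
    (hr : 0 ≤ r) (hΔR : 0 ≤ ΔR) (hP : 0 ≤ P)
    (hρp0 : 0 ≤ ρp) (hρp1 : ρp < 1)
    (L : ℝ) (hL : L = P + (1 - ρp) * r / (1 - δ))
    (hIC : L > ΔR)
    (t : ℕ) (a : ℕ → ℝ)
    (hbd : ∃ C, ∀ n, |a n| ≤ C)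
    (hbefore : ∀ n < t, a n = r)
    (hat : a t ≤ ρp * r + ΔR - P)
    (hafter : ∀ n > t, a n ≤ ρp * r) :
    (∑' n : ℕ, δ ^ n * a n) ≤ r / (1 - δ) + δ ^ t * (ΔR - L) ∧
      r / (1 - δ) + δ ^ t * (ΔR - L) < r / (1 - δ) :=
  pob_first_deviation_lt_honest_general δ r ΔR P ρp hδ0 hδ1 L hL hIC t a hbd hbefore hat hafter
end

section
/- For every round t ∈ ℕ, the discounted payoff of the strategy that deviates exactly once at round t is strictly less than the discounted payoff r/(1−δ) of perpetual honesty if and only if ΔR < L; and the two payoffs are equal if and only if ΔR = L. In particular, honesty is a strict best response against a single deviation exactly when the incentive-compatibility assumption ΔR < L holds. -/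
lemma pob_tsum_eval
    (δ r ΔR P ρp : ℝ)
    (hδ0 : 0 < δ) (hδ1 : δ < 1)
    (t : ℕ) :
    (∑' n : ℕ, δ ^ n *
        (if n < t then r else if n = t then ρp * r + ΔR - P else ρp * r))
      = r / (1 - δ) + δ ^ t * (ΔR - (P + (1 - ρp) * r / (1 - δ))) := by
  set f : ℕ → ℝ := fun n => δ ^ n *
      (if n < t then r else if n = t then ρp * r + ΔR - P else ρp * r) with hf_def
  have hδ1' : (0:ℝ) ≤ δ := hδ0.le
  have hδne : (1:ℝ) - δ ≠ 0 := by linarith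
  have hgeo : Summable (fun n : ℕ => δ ^ n * (ρp * r)) :=
    (summable_geometric_of_lt_one hδ1' hδ1).mul_right _
  have hsupp : ∀ n ∉ Finset.range (t + 1), f n - δ ^ n * (ρp * r) = 0 := by
    intro n hn
    simp only [Finset.mem_range, not_lt] at hn
    have h1 : ¬ n < t := by omega
    have h2 : n ≠ t := by omega
    simp [hf_def, h1, h2]
  have h1 : Summable (fun n => f n - δ ^ n * (ρp * r)) :=
    summable_of_ne_finset_zero hsupp
  have hf : Summable f := by
    have := h1.add hgeo
    simpa using this
  have hg : Summable (fun n => f (n + t)) := (summable_nat_add_iff t).2 hf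
  have hsplit : (∑' n, f n) = (∑ i ∈ Finset.range t, f i) + ∑' n, f (n + t) :=
    (Summable.sum_add_tsum_nat_add t hf).symm
  have hhead : (∑ i ∈ Finset.range t, f i) = (δ ^ t - 1) / (δ - 1) * r := by
    have : ∀ i ∈ Finset.range t, f i = δ ^ i * r := by
      intro i hi
      simp only [Finset.mem_range] at hi
      simp [hf_def, hi]
    rw [Finset.sum_congr rfl this, ← Finset.sum_mul, geom_sum_eq (by linarith : δ ≠ 1)]
  have htail1 : (∑' n, f (n + t)) = f t + ∑' n, f (n + 1 + t) := by
    rw [Summable.tsum_eq_zero_add hg]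
    simp [add_right_comm]
  have htail2 : (∑' n : ℕ, f (n + 1 + t)) = (1 - δ)⁻¹ * (δ ^ (t + 1) * (ρp * r)) := by
    have heq : ∀ n : ℕ, f (n + 1 + t) = δ ^ n * (δ ^ (t + 1) * (ρp * r)) := by
      intro n
      have h1 : ¬ n + 1 + t < t := by omega
      have h2 : n + 1 + t ≠ t := by omega
      simp only [hf_def, h1, h2, if_false]
      rw [show n + 1 + t = n + (t + 1) by ring, pow_add]
      ring
    rw [tsum_congr heq, tsum_mul_right, tsum_geometric_of_lt_one hδ1' hδ1]
  have hft : f t = δ ^ t * (ρp * r + ΔR - P) := by simp [hf_def]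
  have hδne' : δ - 1 ≠ 0 := by linarith
  rw [hsplit, hhead, htail1, htail2, hft]
  field_simp
  ring

/-- For every round `t`, the discounted payoff of deviating exactly once at
round `t` is strictly less than the payoff `r/(1-δ)` of perpetual honesty iff `ΔR < L`,
and the two payoffs are equal iff `ΔR = L`. -/
theorem pob_deviate_once_iff
    (δ r ΔR P ρp : ℝ)
    (hδ0 : 0 < δ) (hδ1 : δ < 1)
    (hr : 0 ≤ r)
    (hρp0 : 0 ≤ ρp) (hρp1 : ρp < 1)
    (L : ℝ) (hL : L = P + (1 - ρp) * r / (1 - δ))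
    (t : ℕ) :
    ((∑' n : ℕ, δ ^ n *
        (if n < t then r else if n = t then ρp * r + ΔR - P else ρp * r))
      < r / (1 - δ) ↔ ΔR < L) ∧
    ((∑' n : ℕ, δ ^ n *
        (if n < t then r else if n = t then ρp * r + ΔR - P else ρp * r))
      = r / (1 - δ) ↔ ΔR = L) := by
  have key := pob_tsum_eval δ r ΔR P ρp hδ0 hδ1 t
  rw [key, ← hL]
  have hpow : (0:ℝ) < δ ^ t := pow_pos hδ0 t
  constructor
  · constructor
    · intro h; nlinarith
    · intro h; nlinarith
  · constructor
    · intro h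
      have h0 : δ ^ t * (ΔR - L) = 0 := by linarith
      rcases mul_eq_zero.mp h0 with h' | h'
      · exact absurd h' hpow.ne'
      · linarith
    · intro h; rw [h]; ring
end

section
/- Perpetual honesty is a strict Nash equilibrium of the PoB discounted game against any finite set of deviations: if (a_n) is a bounded real sequence such that a_n ≤ r for all n, and there exists a round t with a_n = r for n < t and a_t ≤ ρ_p·r + ΔR − P and a_n ≤ ρ_p·r for n > t, then under the assumption L > ΔR the discounted payoff ∑_{n=0}^∞ δ^n·a_n is strictly smaller than r/(1−δ); hence no strategy containing a deviation attains the payoff of the always-honest strategy. -/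
/-- Perpetual honesty is a strict Nash equilibrium of the PoB discounted
game against any strategy containing a deviation: if `a` is bounded, pointwise at most
`r`, agrees with `r` before some round `t`, is at most `ρp r + ΔR - P` at round `t`, and
at most `ρp r` afterwards, then under `L > ΔR` its discounted payoff is strictly less
than `r / (1 - δ)`. -/
theorem pob_honesty_strict_nash
    (δ r ΔR P ρp : ℝ)
    (hδ0 : 0 < δ) (hδ1 : δ < 1)
    (hr : 0 ≤ r) (hΔR : 0 ≤ ΔR) (hP : 0 ≤ P)
    (hρp0 : 0 ≤ ρp) (hρp1 : ρp < 1)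
    (L : ℝ) (hL : L = P + (1 - ρp) * r / (1 - δ))
    (hIC : L > ΔR)
    (a : ℕ → ℝ)
    (hbd : ∃ C, ∀ n, |a n| ≤ C)
    (hle : ∀ n, a n ≤ r)
    (hdev : ∃ t, (∀ n < t, a n = r) ∧ a t ≤ ρp * r + ΔR - P ∧ ∀ n > t, a n ≤ ρp * r) :
    (∑' n : ℕ, δ ^ n * a n) < r / (1 - δ) := by
  obtain ⟨C, hC⟩ := hbd
  obtain ⟨t, hpre, hat, hpost⟩ := hdev
  have h1δ : 0 < 1 - δ := by linarith
  have hδt : 0 < δ ^ t := pow_pos hδ0 t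
  have hgeo : Summable (fun n : ℕ => δ ^ n) := summable_geometric_of_lt_one hδ0.le hδ1
  have htgeo : ∑' n : ℕ, δ ^ n = 1 / (1 - δ) := by
    rw [tsum_geometric_of_lt_one hδ0.le hδ1, one_div]
  have hsa : Summable (fun n => δ ^ n * a n) := by
    apply Summable.of_norm
    refine Summable.of_nonneg_of_le (fun n => norm_nonneg _) (fun n => ?_) (hgeo.mul_right C)
    rw [norm_mul, norm_pow, Real.norm_eq_abs, Real.norm_eq_abs, abs_of_pos hδ0]
    exact mul_le_mul_of_nonneg_left (hC n) (pow_nonneg hδ0.le n)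
  set K := (1 - ρp) * r with hK
  have hK0 : 0 ≤ K := mul_nonneg (by linarith) hr
  set g : ℕ → ℝ := fun n => δ ^ n * (r - a n) with hg
  have hsg : Summable g := by
    have h := (hgeo.mul_right r).sub hsa
    refine h.congr fun n => ?_
    simp only [g]; ring
  have htg : ∑' n, g n = r / (1 - δ) - ∑' n : ℕ, δ ^ n * a n := by
    have : g = (fun n => δ ^ n * r - δ ^ n * a n) := funext fun n => by simp only [g]; ring
    rw [this, Summable.tsum_sub (hgeo.mul_right r) hsa, tsum_mul_right, htgeo]
    ring
  set f1 : ℕ → ℝ := fun n => if t ≤ n then δ ^ n * K else 0 with hf1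
  set f2 : ℕ → ℝ := fun n => if n = t then δ ^ t * (P - ΔR) else 0 with hf2
  have hsf1 : Summable f1 := by
    refine Summable.of_nonneg_of_le (fun n => ?_) (fun n => ?_) (hgeo.mul_right K)
    · simp only [f1]
      split
      · positivity
      · exact le_rfl
    · simp only [f1]
      split
      · exact le_rfl
      · positivity
  have hsf2 : Summable f2 :=
    summable_of_ne_finset_zero (s := {t}) fun n hn => if_neg (by simpa using hn)
  have htf2 : ∑' n, f2 n = δ ^ t * (P - ΔR) := tsum_ite_eq t _
  have htf1 : ∑' n, f1 n = δ ^ t * K / (1 - δ) := by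
    have hsplit := Summable.sum_add_tsum_nat_add (f := f1) t hsf1
    have hzero : ∑ i ∈ Finset.range t, f1 i = 0 := by
      apply Finset.sum_eq_zero
      intro i hi
      simp only [f1, if_neg (not_le.mpr (Finset.mem_range.mp hi))]
    have htail : ∑' i : ℕ, f1 (i + t) = δ ^ t * K / (1 - δ) := by
      have : (fun i : ℕ => f1 (i + t)) = fun i : ℕ => δ ^ i * (δ ^ t * K) := by
        funext i
        simp only [f1, if_pos (Nat.le_add_left t i), pow_add]
        ring
      rw [this, tsum_mul_right, htgeo]
      ring
    linarith [hsplit, hzero, htail]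
  have hpt : ∀ n, f1 n + f2 n ≤ g n := by
    intro n
    rcases lt_trichotomy n t with h | h | h
    · simp only [f1, f2, g, if_neg (not_le.mpr h), if_neg (Nat.ne_of_lt h), hpre n h]
      simp
    · subst h
      simp only [f1, f2, if_pos le_rfl, if_pos rfl, g]
      have h1 : K + (P - ΔR) ≤ r - a n := by
        simp only [K]; linarith [hat]
      nlinarith [pow_pos hδ0 n]
    · simp only [f1, f2, if_pos h.le, if_neg (Nat.ne_of_gt h), g, add_zero]
      have h1 : K ≤ r - a n := by simp only [K]; linarith [hpost n h]
      exact mul_le_mul_of_nonneg_left h1 (pow_nonneg hδ0.le n)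
  have hmain : δ ^ t * K / (1 - δ) + δ ^ t * (P - ΔR) ≤ ∑' n, g n := by
    have := Summable.tsum_le_tsum hpt (hsf1.add hsf2) hsg
    rwa [Summable.tsum_add hsf1 hsf2, htf1, htf2] at this
  have hLd : δ ^ t * K / (1 - δ) + δ ^ t * (P - ΔR) = δ ^ t * (L - ΔR) := by
    rw [hL]; field_simp; ring
  have hpos : 0 < δ ^ t * (L - ΔR) := mul_pos hδt (by linarith)
  linarith [hmain, htg]
end
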